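/- arXiv:2004.05567 — 2 statements merged into one kernel-verified Lean document; each statement's English description precedes it below -/
import Mathlib

section
/- Let n ∈ ℕ with n ≥ 2, let p ∈ (0,2), let x ∈ ℝⁿ with |x| = 1 and let a ∈ [0,∞). Then ∫_{S^{n-1}} |x - a z|^{p-2} dσ(z) ≥ (1+a²)^{p/2 - 1} · (1 + ((4-p)(2-p)/(2n)) · a²/(1+a²)²). -/
/-!
Pair `z` with `-z`. With `t = ⟪x, z⟫`, `s = 2a / (1 + a²) ∈ [-1, 1]` and `q = p / 2 - 1 < 0`,
`|x ∓ a z|² = (1 + a²)(1 ∓ s t)`, so the paired integrand is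
`(1 + a²)^q ((1 - st)^q + (1 + st)^q)`. The even function `(1 - u)^q + (1 + u)^q - q(q - 1)u²`
is convex on `(-1, 1)`: its second derivative is `q(q - 1)((1 - u)^(q-2) + (1 + u)^(q-2) - 2)`,
and the bracket is `≥ 0` by AM-GM since `(1 - u)(1 + u) ≤ 1`. Hence the function is at least its
value `2` at `u = 0`. Integrating, with `∫ t² dσ = 1/n` (rotation invariance and
`∑ᵢ ⟪eᵢ, z⟫² = 1`) and `4 q (q - 1) = (4 - p)(2 - p)`, gives the bound.

`|st| = 1` can only happen at `z = ±x`, where Lean's `0 ^ (p - 2) = 0` would break the pointwise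
bound; these two points are `σ`-null because `n ≥ 2`.
-/

open MeasureTheory Metric

/-- The normalized rotation-invariant (Haar) probability measure `σ` on the unit
sphere `S^{n-1} ⊆ ℝⁿ`. -/
noncomputable def sphereHaar (n : ℕ) :
    Measure (sphere (0 : EuclideanSpace ℝ (Fin n)) 1) :=
  ((volume : Measure (EuclideanSpace ℝ (Fin n))).toSphere Set.univ)⁻¹ •
    (volume : Measure (EuclideanSpace ℝ (Fin n))).toSphere

open Real Set
open scoped Pointwise ENNReal RealInnerProductSpace

lemma two_le_one_sub_rpow_add_one_add_rpow {r v : ℝ} (hr : r ≤ 0) (hv : |v| < 1) :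
    2 ≤ (1 - v) ^ r + (1 + v) ^ r := by
  obtain ⟨hv₁, hv₂⟩ := abs_lt.1 hv
  have h₁ : 0 < 1 - v := by linarith
  have h₂ : 0 < 1 + v := by linarith
  have hprod : 1 ≤ (1 - v) ^ r * (1 + v) ^ r := by
    rw [← mul_rpow h₁.le h₂.le]
    exact one_le_rpow_of_pos_of_le_one_of_nonpos (by nlinarith) (by nlinarith [sq_nonneg v]) hr
  nlinarith [sq_nonneg ((1 - v) ^ r - (1 + v) ^ r), rpow_pos_of_pos h₁ r, rpow_pos_of_pos h₂ r]

lemma hasDerivAt_one_sub_rpow {r v : ℝ} (hv : v < 1) :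
    HasDerivAt (fun y : ℝ ↦ (1 - y) ^ r) (-(r * (1 - v) ^ (r - 1))) v := by
  convert ((hasDerivAt_id' v).const_sub 1).rpow_const (p := r) (Or.inl (by linarith)) using 1
  ring

lemma hasDerivAt_one_add_rpow {r v : ℝ} (hv : -1 < v) :
    HasDerivAt (fun y : ℝ ↦ (1 + y) ^ r) (r * (1 + v) ^ (r - 1)) v := by
  convert ((hasDerivAt_id' v).const_add 1).rpow_const (p := r) (Or.inl (by linarith)) using 1
  ring

lemma convexOn_one_sub_rpow_add_one_add_rpow_sub_mul_sq {q : ℝ} (hq : q ≤ 0) :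
    ConvexOn ℝ (Ioo (-1) 1) fun v : ℝ ↦ (1 - v) ^ q + (1 + v) ^ q - q * (q - 1) * v ^ 2 := by
  have hderiv (v : ℝ) (hv : v ∈ Ioo (-1 : ℝ) 1) :
      HasDerivAt (fun v : ℝ ↦ (1 - v) ^ q + (1 + v) ^ q - q * (q - 1) * v ^ 2)
        (q * ((1 + v) ^ (q - 1) - (1 - v) ^ (q - 1)) - 2 * (q * (q - 1)) * v) v := by
    refine (((hasDerivAt_one_sub_rpow hv.2).add (hasDerivAt_one_add_rpow hv.1)).sub
      (((hasDerivAt_id' v).pow 2).const_mul (q * (q - 1)))).congr_deriv ?_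
    push_cast
    ring
  have hderiv₂ (v : ℝ) (hv : v ∈ Ioo (-1 : ℝ) 1) :
      HasDerivAt
        (fun v : ℝ ↦ q * ((1 + v) ^ (q - 1) - (1 - v) ^ (q - 1)) - 2 * (q * (q - 1)) * v)
        (q * (q - 1) * ((1 - v) ^ (q - 2) + (1 + v) ^ (q - 2) - 2)) v := by
    refine ((((hasDerivAt_one_add_rpow hv.1).sub (hasDerivAt_one_sub_rpow hv.2)).const_mul
      q).sub ((hasDerivAt_id' v).const_mul (2 * (q * (q - 1))))).congr_deriv ?_
    rw [show q - 1 - 1 = q - 2 by ring]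
    ring
  have hD : interior (Ioo (-1 : ℝ) 1) = Ioo (-1) 1 := interior_Ioo
  refine convexOn_of_hasDerivWithinAt2_nonneg (convex_Ioo _ _)
    (fun v hv ↦ (hderiv v hv).continuousAt.continuousWithinAt)
    (fun v hv ↦ (hderiv v (hD ▸ hv)).hasDerivWithinAt)
    (fun v hv ↦ (hderiv₂ v (hD ▸ hv)).hasDerivWithinAt) fun v hv ↦ ?_
  rw [hD] at hv
  have := two_le_one_sub_rpow_add_one_add_rpow (r := q - 2) (by linarith) (abs_lt.2 hv)
  have : 0 ≤ q * (q - 1) := by nlinarith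
  nlinarith

/-- By convexity, the value at `0` of the even function of
`convexOn_one_sub_rpow_add_one_add_rpow_sub_mul_sq` is at most the mean of its values at `±u`. -/
lemma two_add_mul_sq_le_one_sub_rpow_add_one_add_rpow {q u : ℝ} (hq : q ≤ 0) (hu : |u| < 1) :
    2 + q * (q - 1) * u ^ 2 ≤ (1 - u) ^ q + (1 + u) ^ q := by
  obtain ⟨hu₁, hu₂⟩ := abs_lt.1 hu
  have := (convexOn_one_sub_rpow_add_one_add_rpow_sub_mul_sq hq).2
    (show u ∈ Ioo (-1) 1 from ⟨hu₁, hu₂⟩) (show -u ∈ Ioo (-1) 1 from ⟨by linarith, by linarith⟩)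
    (show (0 : ℝ) ≤ 1 / 2 by norm_num) (show (0 : ℝ) ≤ 1 / 2 by norm_num) (by norm_num)
  norm_num [← sub_eq_add_neg] at this
  linarith

section InnerProductSpace

variable {F : Type*} [NormedAddCommGroup F] [InnerProductSpace ℝ F]

lemma norm_sub_smul_sq_of_norm_eq_one {x z : F} (hx : ‖x‖ = 1) (hz : ‖z‖ = 1) (a : ℝ) :
    ‖x - a • z‖ ^ 2 = (1 + a ^ 2) * (1 - 2 * a / (1 + a ^ 2) * ⟪x, z⟫) := by
  rw [norm_sub_sq_real, real_inner_smul_right, norm_smul, mul_pow, hx, hz, Real.norm_eq_abs,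
    sq_abs]
  field_simp
  ring

lemma abs_two_mul_div_one_add_sq_le_one (a : ℝ) : |2 * a / (1 + a ^ 2)| ≤ 1 := by
  rw [abs_div, abs_of_pos (by positivity : (0 : ℝ) < 1 + a ^ 2), div_le_one (by positivity),
    abs_le]
  constructor <;> nlinarith [sq_nonneg (a - 1), sq_nonneg (a + 1)]

lemma abs_real_inner_lt_one_of_ne {x z : F} (hx : ‖x‖ = 1) (hz : ‖z‖ = 1) (h₁ : z ≠ x)
    (h₂ : z ≠ -x) : |⟪x, z⟫| < 1 := by
  refine (abs_real_inner_le_norm x z).trans_eq (by rw [hx, hz, one_mul]) |>.lt_of_ne fun h ↦ ?_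
  rcases abs_eq zero_le_one |>.1 h with h | h
  · exact h₁ ((inner_eq_one_iff_of_norm_eq_one hx hz).1 h).symm
  · exact h₂ (by rw [(inner_eq_neg_one_iff_of_norm_eq_one hx hz).1 h, neg_neg])

lemma rpow_mul_le_norm_sub_smul_rpow_add {x z : F} (hx : ‖x‖ = 1) (hz : ‖z‖ = 1)
    (hxz : |⟪x, z⟫| < 1) (a : ℝ) {p : ℝ} (hp : p ≤ 2) :
    (1 + a ^ 2) ^ (p / 2 - 1) *
        (2 + (4 - p) * (2 - p) * (a ^ 2 / (1 + a ^ 2) ^ 2) * ⟪x, z⟫ ^ 2) ≤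
      ‖x - a • z‖ ^ (p - 2) + ‖x - a • -z‖ ^ (p - 2) := by
  have h₀ : 0 < 1 + a ^ 2 := by positivity
  have hu : |2 * a / (1 + a ^ 2) * ⟪x, z⟫| < 1 := by
    rw [abs_mul]
    nlinarith [abs_two_mul_div_one_add_sq_le_one a, abs_nonneg (2 * a / (1 + a ^ 2)),
      abs_nonneg ⟪x, z⟫]
  obtain ⟨hu₁, hu₂⟩ := abs_lt.1 hu
  have hpow (v : F) : ‖v‖ ^ (p - 2) = (‖v‖ ^ 2) ^ (p / 2 - 1) := by
    rw [← rpow_natCast_mul (norm_nonneg v)]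
    push_cast
    ring_nf
  rw [hpow, hpow, norm_sub_smul_sq_of_norm_eq_one hx hz,
    norm_sub_smul_sq_of_norm_eq_one hx (by rwa [norm_neg]), inner_neg_right, mul_neg,
    sub_neg_eq_add, mul_rpow h₀.le (by linarith), mul_rpow h₀.le (by linarith), ← mul_add]
  refine mul_le_mul_of_nonneg_left ?_ (by positivity)
  refine le_of_eq_of_le ?_
    (two_add_mul_sq_le_one_sub_rpow_add_one_add_rpow (q := p / 2 - 1) (by linarith) hu)
  rw [mul_pow, div_pow]
  ring

end InnerProductSpace

section toSphere

variable {E : Type*} [NormedAddCommGroup E] [NormedSpace ℝ E]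

def LinearIsometryEquiv.restrictSphere (A : E ≃ₗᵢ[ℝ] E) :
    sphere (0 : E) 1 ≃ₜ sphere (0 : E) 1 :=
  A.toHomeomorph.subtype fun _ ↦ by simp

@[simp]
lemma LinearIsometryEquiv.coe_restrictSphere (A : E ≃ₗᵢ[ℝ] E) (z : sphere (0 : E) 1) :
    (A.restrictSphere z : E) = A z :=
  rfl

lemma LinearIsometryEquiv.Ioo_smul_image_restrictSphere_preimage (A : E ≃ₗᵢ[ℝ] E)
    (s : Set (sphere (0 : E) 1)) :
    Ioo (0 : ℝ) 1 • ((↑) '' (A.restrictSphere ⁻¹' s)) = A ⁻¹' (Ioo (0 : ℝ) 1 • ((↑) '' s)) := by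
  ext w
  simp only [mem_smul, mem_image, mem_preimage]
  constructor
  · rintro ⟨r, hr, _, ⟨z, hz, rfl⟩, rfl⟩
    exact ⟨r, hr, _, ⟨_, hz, rfl⟩, by simp⟩
  · rintro ⟨r, hr, _, ⟨z, hz, rfl⟩, hw⟩
    refine ⟨r, hr, _, ⟨A.restrictSphere.symm z, by simpa using hz, rfl⟩, A.injective ?_⟩
    rw [map_smul, ← hw, ← A.coe_restrictSphere, A.restrictSphere.apply_symm_apply]

variable [MeasurableSpace E] [BorelSpace E]

theorem LinearIsometryEquiv.measurePreserving_restrictSphere {μ : Measure E} (A : E ≃ₗᵢ[ℝ] E)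
    (hA : MeasurePreserving A μ μ) :
    MeasurePreserving A.restrictSphere μ.toSphere μ.toSphere := by
  refine ⟨A.restrictSphere.continuous.measurable, Measure.ext fun s hs ↦ ?_⟩
  rw [Measure.map_apply A.restrictSphere.continuous.measurable hs, μ.toSphere_apply' hs,
    μ.toSphere_apply' (A.restrictSphere.continuous.measurable hs),
    A.Ioo_smul_image_restrictSphere_preimage,
    hA.measure_preimage_emb A.toHomeomorph.measurableEmbedding]

/-- `Ioo 0 1 • {z}` lies on the line through `z`, a null set for a Haar measure. -/
theorem MeasureTheory.Measure.nullSingletonClass_toSphere [FiniteDimensional ℝ E] (μ : Measure E)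
    [μ.IsAddHaarMeasure] (hE : 1 < Module.finrank ℝ E) : NullSingletonClass μ.toSphere := by
  refine ⟨fun z ↦ ?_⟩
  have hz : (z : E) ≠ 0 := ne_zero_of_mem_unit_sphere z
  have hline : (ℝ ∙ (z : E)) ≠ ⊤ := fun h ↦ by
    have := finrank_span_singleton (K := ℝ) hz
    rw [h, finrank_top] at this
    omega
  rw [μ.toSphere_apply' (measurableSet_singleton z), image_singleton, smul_singleton,
    measure_mono_null _ (Measure.addHaar_submodule μ _ hline), mul_zero]
  rintro _ ⟨r, -, rfl⟩
  exact Submodule.smul_mem _ r (Submodule.mem_span_singleton_self _)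

end toSphere

local notation "𝔼" n:max => EuclideanSpace ℝ (Fin n)

local notation "𝕊" n:max => sphere (0 : 𝔼 n) 1

section sphereHaar

variable {n : ℕ}

instance isProbabilityMeasure_sphereHaar [NeZero n] : IsProbabilityMeasure (sphereHaar n) := by
  have : NeZero (volume : Measure (𝔼 n)).toSphere := ⟨Measure.toSphere_ne_zero _⟩
  unfold sphereHaar
  infer_instance

theorem measurePreserving_restrictSphere_sphereHaar (A : 𝔼 n ≃ₗᵢ[ℝ] _) :
    MeasurePreserving A.restrictSphere (sphereHaar n) (sphereHaar n) :=
  have hA := A.measurePreserving_restrictSphere A.measurePreserving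
  ⟨hA.measurable, by rw [sphereHaar, Measure.map_smul, hA.map_eq]⟩

theorem nullSingletonClass_sphereHaar (hn : 2 ≤ n) : NullSingletonClass (sphereHaar n) := by
  have := Measure.nullSingletonClass_toSphere (volume : Measure (𝔼 n))
    (by rwa [finrank_euclideanSpace_fin])
  exact ⟨fun z ↦ by simp [sphereHaar]⟩

theorem lintegral_add_comp_neg_sphereHaar {f : 𝕊 n → ℝ≥0∞} (hf : Measurable f) :
    ∫⁻ z, (f z + f (-z)) ∂sphereHaar n = 2 * ∫⁻ z, f z ∂sphereHaar n := by
  rw [lintegral_add_left hf, two_mul]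
  congr 1
  exact (measurePreserving_restrictSphere_sphereHaar (.neg ℝ)).lintegral_comp_emb
    (LinearIsometryEquiv.neg ℝ).restrictSphere.measurableEmbedding f

/-- A reflection exchanging `x` and `y` preserves `sphereHaar n`. -/
theorem integral_comp_inner_sphereHaar_eq {x y : 𝔼 n} (h : ‖x‖ = ‖y‖) (f : ℝ → ℝ) :
    ∫ z, f ⟪x, (z : 𝔼 n)⟫ ∂sphereHaar n = ∫ z, f ⟪y, (z : 𝔼 n)⟫ ∂sphereHaar n := by
  set R := (ℝ ∙ (x - y))ᗮ.reflection
  have hR (z : 𝔼 n) : ⟪x, R z⟫ = ⟪y, z⟫ := by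
    rw [← Submodule.reflection_sub h, ← R.inner_map_map, Submodule.reflection_reflection]
  simp_rw [← hR]
  exact ((measurePreserving_restrictSphere_sphereHaar R).integral_comp
    R.restrictSphere.measurableEmbedding (fun z ↦ f ⟪x, (z : 𝔼 n)⟫)).symm

theorem integral_inner_sq_sphereHaar {x : 𝔼 n} (hx : ‖x‖ = 1) :
    ∫ z, ⟪x, (z : 𝔼 n)⟫ ^ 2 ∂sphereHaar n = 1 / n := by
  have : NeZero n := ⟨by rintro rfl; simp [Subsingleton.elim x 0] at hx⟩
  set e := EuclideanSpace.basisFun (Fin n) ℝ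
  have hsum (z : 𝕊 n) : ∑ i, ⟪e i, (z : 𝔼 n)⟫ ^ 2 = 1 := by
    calc ∑ i, ⟪e i, (z : 𝔼 n)⟫ ^ 2 = ∑ i, ⟪(z : 𝔼 n), e i⟫ * ⟪e i, (z : 𝔼 n)⟫ := by
          simp_rw [sq, real_inner_comm (e _) (z : 𝔼 n)]
      _ = ⟪(z : 𝔼 n), (z : 𝔼 n)⟫ := e.sum_inner_mul_inner _ _
      _ = 1 := by rw [real_inner_self_eq_norm_sq, norm_eq_of_mem_sphere, one_pow]
  have hint (i : Fin n) : Integrable (fun z : 𝕊 n ↦ ⟪e i, (z : 𝔼 n)⟫ ^ 2) (sphereHaar n) :=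
    (by fun_prop : Continuous _).integrable_of_hasCompactSupport (.of_compactSpace _)
  have hn : (n : ℝ) ≠ 0 := Nat.cast_ne_zero.2 (NeZero.ne n)
  rw [eq_div_iff hn, mul_comm]
  calc (n : ℝ) * ∫ z, ⟪x, (z : 𝔼 n)⟫ ^ 2 ∂sphereHaar n
      = ∑ i, ∫ z, ⟪e i, (z : 𝔼 n)⟫ ^ 2 ∂sphereHaar n := by
        simp [integral_comp_inner_sphereHaar_eq (x := e _) (y := x) (by simp [hx]) (· ^ 2)]
    _ = 1 := by rw [← integral_finsetSum _ fun i _ ↦ hint i]; simp [hsum]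

theorem integral_const_add_mul_inner_sq_sphereHaar {x : 𝔼 n} (hx : ‖x‖ = 1) (b c : ℝ) :
    ∫ z, (b + c * ⟪x, (z : 𝔼 n)⟫ ^ 2) ∂sphereHaar n = b + c / n := by
  have : NeZero n := ⟨by rintro rfl; simp [Subsingleton.elim x 0] at hx⟩
  rw [integral_add (integrable_const _)
    ((by fun_prop : Continuous _).integrable_of_hasCompactSupport (.of_compactSpace _)),
    integral_const_mul, integral_inner_sq_sphereHaar hx]
  simp [div_eq_mul_inv]

theorem ae_abs_inner_lt_one_sphereHaar (hn : 2 ≤ n) {x : 𝔼 n} (hx : ‖x‖ = 1) :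
    ∀ᵐ z : 𝕊 n ∂sphereHaar n, |⟪x, (z : 𝔼 n)⟫| < 1 := by
  have := nullSingletonClass_sphereHaar hn
  let x' : 𝕊 n := ⟨x, mem_sphere_zero_iff_norm.2 hx⟩
  filter_upwards [Measure.ae_ne (sphereHaar n) x', Measure.ae_ne (sphereHaar n) (-x')]
    with z h₁ h₂
  exact abs_real_inner_lt_one_of_ne hx (norm_eq_of_mem_sphere z) (fun h ↦ h₁ (Subtype.ext h))
    fun h ↦ h₂ (Subtype.ext h)

end sphereHaar

theorem stmt_8_general (n : ℕ) (hn : 2 ≤ n) (p : ℝ) (hp : p ∈ Set.Ioo (0 : ℝ) 2)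
    (x : EuclideanSpace ℝ (Fin n)) (hx : ‖x‖ = 1) (a : ℝ) :
    ENNReal.ofReal ((1 + a ^ 2) ^ (p / 2 - 1) *
        (1 + (4 - p) * (2 - p) / (2 * n) * (a ^ 2 / (1 + a ^ 2) ^ 2))) ≤
      ∫⁻ z : sphere (0 : EuclideanSpace ℝ (Fin n)) 1,
        ENNReal.ofReal (‖x - a • (z : EuclideanSpace ℝ (Fin n))‖ ^ (p - 2)) ∂(sphereHaar n) := by
  have : NeZero n := ⟨by omega⟩
  set K := (1 + a ^ 2) ^ (p / 2 - 1)
  set c := (4 - p) * (2 - p) * (a ^ 2 / (1 + a ^ 2) ^ 2)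
  have hc : 0 ≤ c := mul_nonneg (by nlinarith [hp.2]) (by positivity)
  set G : 𝕊 n → ℝ≥0∞ := fun z ↦ ENNReal.ofReal (‖x - a • (z : 𝔼 n)‖ ^ (p - 2))
  have hpair : ∀ᵐ z : 𝕊 n ∂sphereHaar n,
      ENNReal.ofReal (K * (2 + c * ⟪x, (z : 𝔼 n)⟫ ^ 2)) ≤ G z + G (-z) := by
    filter_upwards [ae_abs_inner_lt_one_sphereHaar hn hx] with z hz
    rw [← ENNReal.ofReal_add (by positivity) (by positivity)]
    exact ENNReal.ofReal_le_ofReal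
      (rpow_mul_le_norm_sub_smul_rpow_add hx (norm_eq_of_mem_sphere z) hz a hp.2.le)
  refine (ENNReal.mul_le_mul_iff_right two_ne_zero ENNReal.ofNat_ne_top).1 ?_
  calc 2 * ENNReal.ofReal (K * (1 + (4 - p) * (2 - p) / (2 * n) * (a ^ 2 / (1 + a ^ 2) ^ 2)))
      = ENNReal.ofReal (∫ z, K * (2 + c * ⟪x, (z : 𝔼 n)⟫ ^ 2) ∂sphereHaar n) := by
        rw [integral_const_mul, integral_const_add_mul_inner_sq_sphereHaar hx,
          ← ENNReal.ofReal_ofNat 2, ← ENNReal.ofReal_mul zero_le_two]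
        congr 1
        simp only [c]
        field_simp
    _ = ∫⁻ z, ENNReal.ofReal (K * (2 + c * ⟪x, (z : 𝔼 n)⟫ ^ 2)) ∂sphereHaar n :=
        ofReal_integral_eq_lintegral_ofReal
          ((by fun_prop : Continuous _).integrable_of_hasCompactSupport (.of_compactSpace _))
          (.of_forall fun z ↦ by positivity)
    _ ≤ ∫⁻ z, (G z + G (-z)) ∂sphereHaar n := lintegral_mono_ae hpair
    _ = 2 * ∫⁻ z, G z ∂sphereHaar n := lintegral_add_comp_neg_sphereHaar (by fun_prop)

theorem stmt_8 (n : ℕ) (hn : 2 ≤ n) (p : ℝ) (hp : p ∈ Set.Ioo (0 : ℝ) 2)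
    (x : EuclideanSpace ℝ (Fin n)) (hx : ‖x‖ = 1) (a : ℝ) (ha : 0 ≤ a) :
    ENNReal.ofReal ((1 + a ^ 2) ^ (p / 2 - 1) *
        (1 + (4 - p) * (2 - p) / (2 * n) * (a ^ 2 / (1 + a ^ 2) ^ 2))) ≤
      ∫⁻ z : sphere (0 : EuclideanSpace ℝ (Fin n)) 1,
        ENNReal.ofReal (‖x - a • (z : EuclideanSpace ℝ (Fin n))‖ ^ (p - 2)) ∂(sphereHaar n) :=
  stmt_8_general n hn p hp x hx a
end

section
/- Let λ ∈ ℝ with λ > -1/2, let s ∈ ℝ with s ≥ 3, and let a ∈ (0,∞). Then ∫_{-1}^{1} (1 + 2at + a²)^{s-1} dμ_λ(t) ≥ ∫_{-1}^{1} (1 + 2at + a²)^{s-2} dμ_{λ+1}(t). -/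
open MeasureTheory

/-- The normalizing constant `c_m = Γ(m/2+1)/(2 Γ(1/2) Γ(m/2+1/2))`. -/
noncomputable def cConst (m : ℝ) : ℝ :=
  Real.Gamma (m / 2 + 1) / (2 * Real.Gamma (1 / 2) * Real.Gamma (m / 2 + 1 / 2))

/-- The probability measure `μ_λ` on `[-1,1]` with density `2 c_{2λ} (1-t²)^{λ-1/2}`
with respect to Lebesgue measure. -/
noncomputable def muMeasure (l : ℝ) : Measure ℝ :=
  (volume.restrict (Set.Icc (-1 : ℝ) 1)).withDensity
    (fun t => ENNReal.ofReal (2 * cConst (2 * l) * (1 - t ^ 2) ^ (l - 1 / 2)))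

open Set

/-!
Write `p = λ - 1/2` and `f(t) = 1 + 2at + a²`, which is nonnegative on `[-1, 1]`.

First, `μ_{λ+1}` is dominated by `μ_λ` in the convex order. The signed measure
`μ_λ - μ_{λ+1}` has density a positive multiple of `((2p+3)t² - 1)(1-t²)^p`; it annihilates
affine functions (the constant term because `-t(1-t²)^(p+1)` is a primitive, the linear one by
oddness), and its density changes sign exactly at `±t₀` with `t₀² = 1/(2p+3)`. Subtracting from
a convex `g` its secant through `±t₀` therefore makes the integrand nonnegative. With
`g = f^(s-2)` this gives `∫ f^(s-2) dμ_{λ+1} ≤ ∫ f^(s-2) dμ_λ`.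

Second, `∫ f^r dμ_λ ≤ ∫ f^(r+1) dμ_λ` for `r ≥ 0`: pairing `t` with `-t` under the symmetric
measure `μ_λ`, it suffices that `x^r (x-1) + y^r (y-1) ≥ 0` whenever `x, y ≥ 0` and
`x + y ≥ 2`, and indeed `f(t) + f(-t) = 2 + 2a²`.
-/

lemma setIntegral_Icc_comp_neg {c : ℝ} (hc : 0 ≤ c) (F : ℝ → ℝ) :
    ∫ t in Icc (-c) c, F (-t) = ∫ t in Icc (-c) c, F t := by
  simp only [integral_Icc_eq_integral_Ioc,
    ← intervalIntegral.integral_of_le (by linarith : -c ≤ c)]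
  simp [intervalIntegral.integral_comp_neg]

lemma setIntegral_Icc_eq_zero_of_odd {c : ℝ} (hc : 0 ≤ c) {F : ℝ → ℝ}
    (hF : ∀ t, F (-t) = -F t) : ∫ t in Icc (-c) c, F t = 0 := by
  have := setIntegral_Icc_comp_neg hc F
  simp only [hF, integral_neg] at this
  linarith

lemma setIntegral_Icc_nonneg_of_add_comp_neg_nonneg {c : ℝ} (hc : 0 ≤ c) {F : ℝ → ℝ}
    (hFi : IntegrableOn F (Icc (-c) c)) (hF : ∀ t ∈ Icc (-c) c, 0 ≤ F t + F (-t)) :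
    0 ≤ ∫ t in Icc (-c) c, F t := by
  have hFi' : IntegrableOn (fun t => F (-t)) (Icc (-c) c) := by
    rw [← intervalIntegrable_iff_integrableOn_Icc_of_le (by linarith)] at hFi ⊢
    simpa using (IntervalIntegrable.iff_comp_neg (f := F)).1 hFi.symm
  have := setIntegral_nonneg (μ := volume) measurableSet_Icc hF
  rw [integral_add hFi hFi', setIntegral_Icc_comp_neg hc] at this
  linarith

lemma ConvexOn.sub_secant_mul_nonneg {s : Set ℝ} {f : ℝ → ℝ} (hf : ConvexOn ℝ s f)
    {x y z : ℝ} (hx : x ∈ s) (hy : y ∈ s) (hz : z ∈ s) (hxy : x ≠ y) :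
    0 ≤ (f z - (f x + (f y - f x) / (y - x) * (z - x))) * ((z - x) * (z - y)) := by
  rcases eq_or_ne z x with rfl | hzx
  · simp
  have hyx : y - x ≠ 0 := sub_ne_zero.2 hxy.symm
  have hzx' : z - x ≠ 0 := sub_ne_zero.2 hzx
  have key : (f z - (f x + (f y - f x) / (y - x) * (z - x))) * ((z - x) * (z - y)) =
      (z - x) ^ 2 * (((f z - f x) / (z - x) - (f y - f x) / (y - x)) * (z - y)) := by
    field_simp
    ring
  rw [key]
  refine mul_nonneg (sq_nonneg _) ?_
  rcases le_total z y with hzy | hyz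
  · exact mul_nonneg_of_nonpos_of_nonpos
      (sub_nonpos.2 (hf.secant_mono hx hz hy hzx hxy.symm hzy)) (sub_nonpos.2 hzy)
  · exact mul_nonneg (sub_nonneg.2 (hf.secant_mono hx hy hz hxy.symm hzx hyz)) (sub_nonneg.2 hyz)

lemma rpow_mul_sub_one_add_rpow_mul_sub_one_nonneg {r x y : ℝ} (hr : 0 ≤ r) (hx : 0 ≤ x)
    (hy : 0 ≤ y) (hxy : 2 ≤ x + y) : 0 ≤ x ^ r * (x - 1) + y ^ r * (y - 1) := by
  have hmono : 0 ≤ (x ^ r - y ^ r) * (x - y) := by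
    rcases le_total y x with h | h
    · exact mul_nonneg (sub_nonneg.2 (Real.rpow_le_rpow hy h hr)) (sub_nonneg.2 h)
    · exact mul_nonneg_of_nonpos_of_nonpos (sub_nonpos.2 (Real.rpow_le_rpow hx h hr))
        (sub_nonpos.2 h)
  have hsum : 0 ≤ (x ^ r + y ^ r) * (x + y - 2) :=
    mul_nonneg (add_nonneg (Real.rpow_nonneg hx r) (Real.rpow_nonneg hy r)) (by linarith)
  have hsplit : 2 * (x ^ r * (x - 1) + y ^ r * (y - 1)) =
      (x ^ r - y ^ r) * (x - y) + (x ^ r + y ^ r) * (x + y - 2) := by ring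
  linarith

lemma one_add_two_mul_mul_add_sq_nonneg (a : ℝ) {t : ℝ} (ht : t ∈ Icc (-1 : ℝ) 1) :
    0 ≤ 1 + 2 * a * t + a ^ 2 := by
  nlinarith [sq_nonneg (a + t), ht.1, ht.2]

lemma convexOn_rpow_one_add_two_mul_mul_add_sq {r : ℝ} (hr : 1 ≤ r) (a : ℝ) :
    ConvexOn ℝ (Icc (-1) 1) fun t : ℝ => (1 + 2 * a * t + a ^ 2) ^ r := by
  refine ⟨convex_Icc _ _, fun x hx y hy θ η hθ hη hθη => ?_⟩
  have h := (convexOn_rpow hr).2 (one_add_two_mul_mul_add_sq_nonneg a hx)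
    (one_add_two_mul_mul_add_sq_nonneg a hy) hθ hη hθη
  simp only [smul_eq_mul] at h ⊢
  convert h using 2
  linear_combination (1 + a ^ 2) * hθη.symm

section OneSubSqWeight

variable {p : ℝ}

lemma one_sub_sq_rpow_le {t : ℝ} (ht : t ∈ Icc (-1 : ℝ) 1) :
    (1 - t ^ 2) ^ p ≤ 1 + (1 - t) ^ p + (1 + t) ^ p := by
  have h₁ : 0 ≤ 1 - t := by linarith [ht.2]
  have h₂ : 0 ≤ 1 + t := by linarith [ht.1]
  have hA := Real.rpow_nonneg h₁ p
  have hB := Real.rpow_nonneg h₂ p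
  rcases le_total 0 p with hp | hp
  · have : (1 - t ^ 2) ^ p ≤ 1 := Real.rpow_le_one (by nlinarith) (by nlinarith) hp
    linarith
  rw [show 1 - t ^ 2 = (1 - t) * (1 + t) by ring, Real.mul_rpow h₁ h₂]
  rcases le_total 0 t with ht₀ | ht₀
  · have := mul_le_mul_of_nonneg_left
      (Real.rpow_le_one_of_one_le_of_nonpos (by linarith : 1 ≤ 1 + t) hp) hA
    linarith
  · have := mul_le_mul_of_nonneg_right
      (Real.rpow_le_one_of_one_le_of_nonpos (by linarith : 1 ≤ 1 - t) hp) hB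
    linarith

lemma integrableOn_one_sub_sq_rpow (hp : -1 < p) :
    IntegrableOn (fun t : ℝ => (1 - t ^ 2) ^ p) (Icc (-1) 1) := by
  have hsub : IntegrableOn (fun t : ℝ => (1 - t) ^ p) (Icc (-1) 1) := by
    rw [← intervalIntegrable_iff_integrableOn_Icc_of_le (by norm_num)]
    simpa [show (1 : ℝ) - 2 = -1 by norm_num] using
      (intervalIntegral.intervalIntegrable_rpow' (a := 2) (b := 0) hp).comp_sub_left 1
  have hadd : IntegrableOn (fun t : ℝ => (1 + t) ^ p) (Icc (-1) 1) := by
    rw [← intervalIntegrable_iff_integrableOn_Icc_of_le (by norm_num)]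
    simpa [add_comm, show (2 : ℝ) - 1 = 1 by norm_num] using
      (intervalIntegral.intervalIntegrable_rpow' (a := 0) (b := 2) hp).comp_add_right 1
  refine Integrable.mono' (g := fun t => 1 + (1 - t) ^ p + (1 + t) ^ p)
    (((integrableOn_const (by simp)).add hsub).add hadd)
    ((measurable_const.sub (measurable_id.pow_const 2)).pow_const p).aestronglyMeasurable ?_
  filter_upwards [ae_restrict_mem measurableSet_Icc] with t ht
  rw [Real.norm_of_nonneg (Real.rpow_nonneg (by nlinarith [ht.1, ht.2]) p)]
  exact one_sub_sq_rpow_le ht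

lemma integrableOn_mul_one_sub_sq_rpow (hp : -1 < p) {φ : ℝ → ℝ}
    (hφ : ContinuousOn φ (Icc (-1) 1)) :
    IntegrableOn (fun t => φ t * (1 - t ^ 2) ^ p) (Icc (-1) 1) :=
  (integrableOn_one_sub_sq_rpow hp).continuousOn_mul hφ isCompact_Icc

lemma setIntegral_quadratic_mul_one_sub_sq_rpow_eq_zero (hp : -1 < p) :
    ∫ t in Icc (-1 : ℝ) 1, ((2 * p + 3) * t ^ 2 - 1) * (1 - t ^ 2) ^ p = 0 := by
  have hp1 : 0 < p + 1 := by linarith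
  have hcont : ContinuousOn (fun t : ℝ => -(t * (1 - t ^ 2) ^ (p + 1))) (Icc (-1) 1) :=
    ((continuous_id.mul ((continuous_const.sub (continuous_pow 2)).rpow_const
      fun _ => Or.inr hp1.le)).neg).continuousOn
  have hderiv : ∀ t ∈ Ioo (-1 : ℝ) 1, HasDerivAt (fun t : ℝ => -(t * (1 - t ^ 2) ^ (p + 1)))
      (((2 * p + 3) * t ^ 2 - 1) * (1 - t ^ 2) ^ p) t := by
    intro t ht
    have hpos : 0 < 1 - t ^ 2 := by nlinarith [ht.1, ht.2]
    have hin : HasDerivAt (fun t : ℝ => 1 - t ^ 2) (-(2 * t)) t := by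
      simpa using (hasDerivAt_pow 2 t).const_sub 1
    refine (((hasDerivAt_id' t).mul
      (hin.rpow_const (p := p + 1) (Or.inl hpos.ne'))).neg).congr_deriv ?_
    rw [add_sub_cancel_right, Real.rpow_add_one hpos.ne']
    ring
  have hint : IntervalIntegrable (fun t : ℝ => ((2 * p + 3) * t ^ 2 - 1) * (1 - t ^ 2) ^ p)
      volume (-1) 1 :=
    (intervalIntegrable_iff_integrableOn_Icc_of_le (by norm_num)).2
      (integrableOn_mul_one_sub_sq_rpow hp (by fun_prop))
  rw [integral_Icc_eq_integral_Ioc, ← intervalIntegral.integral_of_le (by norm_num),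
    intervalIntegral.integral_eq_sub_of_hasDerivAt_of_le (by norm_num) hcont hderiv hint]
  norm_num [Real.zero_rpow hp1.ne']

lemma setIntegral_affine_mul_quadratic_mul_one_sub_sq_rpow_eq_zero (hp : -1 < p) (α β : ℝ) :
    ∫ t in Icc (-1 : ℝ) 1, (α + β * t) * (((2 * p + 3) * t ^ 2 - 1) * (1 - t ^ 2) ^ p) = 0 := by
  have hodd : ∫ t in Icc (-1 : ℝ) 1, β * t * (((2 * p + 3) * t ^ 2 - 1) * (1 - t ^ 2) ^ p) = 0 :=
    setIntegral_Icc_eq_zero_of_odd zero_le_one fun t => by simp only [neg_sq]; ring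
  have hsplit : ∀ t : ℝ, (α + β * t) * (((2 * p + 3) * t ^ 2 - 1) * (1 - t ^ 2) ^ p) =
      α * (((2 * p + 3) * t ^ 2 - 1) * (1 - t ^ 2) ^ p) +
        β * t * (((2 * p + 3) * t ^ 2 - 1) * (1 - t ^ 2) ^ p) := fun t => add_mul _ _ _
  simp only [hsplit]
  rw [integral_add, integral_const_mul, setIntegral_quadratic_mul_one_sub_sq_rpow_eq_zero hp, hodd]
  · simp
  · exact (integrableOn_mul_one_sub_sq_rpow hp
      (φ := fun t => α * ((2 * p + 3) * t ^ 2 - 1)) (by fun_prop)).congr_fun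
      (fun t _ => by ring) measurableSet_Icc
  · exact (integrableOn_mul_one_sub_sq_rpow hp
      (φ := fun t => β * t * ((2 * p + 3) * t ^ 2 - 1)) (by fun_prop)).congr_fun
      (fun t _ => by ring) measurableSet_Icc

lemma setIntegral_mul_quadratic_mul_one_sub_sq_rpow_nonneg (hp : -1 < p) {g : ℝ → ℝ}
    (hg : ConvexOn ℝ (Icc (-1) 1) g) (hgc : ContinuousOn g (Icc (-1) 1)) :
    0 ≤ ∫ t in Icc (-1 : ℝ) 1, g t * (((2 * p + 3) * t ^ 2 - 1) * (1 - t ^ 2) ^ p) := by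
  have hp3 : 0 < 2 * p + 3 := by linarith
  set t₀ := √(1 / (2 * p + 3))
  have ht₀ : 0 < t₀ := Real.sqrt_pos.2 (by positivity)
  have ht₀sq : t₀ ^ 2 = 1 / (2 * p + 3) := Real.sq_sqrt (by positivity)
  have ht₀1 : t₀ ≤ 1 := Real.sqrt_le_one.2 ((div_le_one hp3).2 (by linarith))
  have hmem : t₀ ∈ Icc (-1 : ℝ) 1 := ⟨by linarith, ht₀1⟩
  have hmem' : -t₀ ∈ Icc (-1 : ℝ) 1 := ⟨by linarith, by linarith⟩
  -- `±t₀` are the roots of `(2p+3)t² - 1`, where the weight changes sign.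
  set L : ℝ → ℝ := fun z => g (-t₀) + (g t₀ - g (-t₀)) / (t₀ - -t₀) * (z - -t₀)
  have hL :
      ∫ t in Icc (-1 : ℝ) 1, L t * (((2 * p + 3) * t ^ 2 - 1) * (1 - t ^ 2) ^ p) = 0 := by
    rw [← setIntegral_affine_mul_quadratic_mul_one_sub_sq_rpow_eq_zero hp
      (g (-t₀) + (g t₀ - g (-t₀)) / (t₀ - -t₀) * t₀) ((g t₀ - g (-t₀)) / (t₀ - -t₀))]
    congr with t
    ring
  have hint : ∀ φ : ℝ → ℝ, ContinuousOn φ (Icc (-1) 1) →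
      IntegrableOn (fun t => φ t * (((2 * p + 3) * t ^ 2 - 1) * (1 - t ^ 2) ^ p)) (Icc (-1) 1) :=
    fun φ hφ => (integrableOn_mul_one_sub_sq_rpow hp
      (φ := fun t => φ t * ((2 * p + 3) * t ^ 2 - 1)) (hφ.mul (by fun_prop))).congr_fun
      (fun t _ => by ring) measurableSet_Icc
  have hLc : ContinuousOn L (Icc (-1) 1) := by fun_prop
  calc 0 ≤ ∫ t in Icc (-1 : ℝ) 1,
        (g t - L t) * (((2 * p + 3) * t ^ 2 - 1) * (1 - t ^ 2) ^ p) := by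
        refine setIntegral_nonneg measurableSet_Icc fun t ht => ?_
        have hq : (2 * p + 3) * t ^ 2 - 1 = (2 * p + 3) * ((t - -t₀) * (t - t₀)) := by
          rw [show (1 : ℝ) = (2 * p + 3) * t₀ ^ 2 by rw [ht₀sq]; field_simp]
          ring
        have := mul_nonneg
          (mul_nonneg hp3.le (hg.sub_secant_mul_nonneg hmem' hmem ht (by linarith)))
          (Real.rpow_nonneg (by nlinarith [ht.1, ht.2] : 0 ≤ 1 - t ^ 2) p)
        rw [hq]
        exact this.trans_eq (by ring)
    _ = ∫ t in Icc (-1 : ℝ) 1, g t * (((2 * p + 3) * t ^ 2 - 1) * (1 - t ^ 2) ^ p) := by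
        have := integral_add (hint (fun t => g t - L t) (hgc.sub hLc)) (hint L hLc)
        beta_reduce at this
        rw [hL, add_zero] at this
        rw [← this]
        congr 1
        ext t
        ring

lemma mul_setIntegral_mul_one_sub_sq_rpow_add_one_le (hp : -1 < p) {g : ℝ → ℝ}
    (hg : ConvexOn ℝ (Icc (-1) 1) g) (hgc : ContinuousOn g (Icc (-1) 1)) :
    (2 * p + 3) * ∫ t in Icc (-1 : ℝ) 1, g t * (1 - t ^ 2) ^ (p + 1) ≤
      (2 * p + 2) * ∫ t in Icc (-1 : ℝ) 1, g t * (1 - t ^ 2) ^ p := by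
  rw [← sub_nonneg, ← integral_const_mul, ← integral_const_mul, ← integral_sub]
  · refine (setIntegral_mul_quadratic_mul_one_sub_sq_rpow_nonneg hp hg hgc).trans_eq
      (setIntegral_congr_fun measurableSet_Icc fun t ht => ?_)
    rw [Real.rpow_add_one' (by nlinarith [ht.1, ht.2]) (by linarith)]
    ring
  · exact (integrableOn_mul_one_sub_sq_rpow hp (φ := fun t => (2 * p + 2) * g t)
      (continuousOn_const.mul hgc)).congr_fun (fun t _ => by ring) measurableSet_Icc
  · exact (integrableOn_mul_one_sub_sq_rpow (p := p + 1) (by linarith)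
      (φ := fun t => (2 * p + 3) * g t) (continuousOn_const.mul hgc)).congr_fun
      (fun t _ => by ring) measurableSet_Icc

lemma setIntegral_rpow_mul_one_sub_sq_rpow_le (hp : -1 < p) {r : ℝ} (hr : 0 ≤ r) (a : ℝ) :
    ∫ t in Icc (-1 : ℝ) 1, (1 + 2 * a * t + a ^ 2) ^ r * (1 - t ^ 2) ^ p ≤
      ∫ t in Icc (-1 : ℝ) 1, (1 + 2 * a * t + a ^ 2) ^ (r + 1) * (1 - t ^ 2) ^ p := by
  have hcont : ∀ q : ℝ, 0 ≤ q →
      ContinuousOn (fun t : ℝ => (1 + 2 * a * t + a ^ 2) ^ q) (Icc (-1) 1) :=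
    fun q hq => ((by fun_prop : Continuous fun t : ℝ => 1 + 2 * a * t + a ^ 2).rpow_const
      (p := q) fun _ => Or.inr hq).continuousOn
  rw [← sub_nonneg, ← integral_sub (integrableOn_mul_one_sub_sq_rpow hp (hcont _ (by linarith)))
    (integrableOn_mul_one_sub_sq_rpow hp (hcont r hr))]
  refine setIntegral_Icc_nonneg_of_add_comp_neg_nonneg zero_le_one
    (((integrableOn_mul_one_sub_sq_rpow hp (hcont _ (by linarith))).sub
      (integrableOn_mul_one_sub_sq_rpow hp (hcont r hr)))) fun t ht => ?_
  have ht' : -t ∈ Icc (-1 : ℝ) 1 := ⟨by linarith [ht.2], by linarith [ht.1]⟩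
  have hx := one_add_two_mul_mul_add_sq_nonneg a ht
  have hy := one_add_two_mul_mul_add_sq_nonneg a ht'
  have key := rpow_mul_sub_one_add_rpow_mul_sub_one_nonneg hr hx hy (by nlinarith [sq_nonneg a])
  have hw := Real.rpow_nonneg (by nlinarith [ht.1, ht.2] : 0 ≤ 1 - t ^ 2) p
  rw [Real.rpow_add_one' hx (by linarith), Real.rpow_add_one' hy (by linarith), neg_sq]
  exact (mul_nonneg key hw).trans_eq (by ring)

end OneSubSqWeight

lemma cConst_pos {m : ℝ} (hm : -1 < m) : 0 < cConst m := by
  unfold cConst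
  have h₁ := Real.Gamma_pos_of_pos (by linarith : 0 < m / 2 + 1)
  have h₂ := Real.Gamma_pos_of_pos (by norm_num : (0 : ℝ) < 1 / 2)
  have h₃ := Real.Gamma_pos_of_pos (by linarith : 0 < m / 2 + 1 / 2)
  positivity

lemma cConst_add_two_mul {m : ℝ} (hm : -1 < m) :
    cConst (m + 2) * (m + 1) = cConst m * (m + 2) := by
  unfold cConst
  rw [show (m + 2) / 2 + 1 = (m / 2 + 1) + 1 by ring,
    show (m + 2) / 2 + 1 / 2 = (m / 2 + 1 / 2) + 1 by ring,
    Real.Gamma_add_one (s := m / 2 + 1) (by linarith),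
    Real.Gamma_add_one (s := m / 2 + 1 / 2) (by linarith)]
  have h₂ := Real.Gamma_pos_of_pos (by norm_num : (0 : ℝ) < 1 / 2)
  have h₃ := Real.Gamma_pos_of_pos (by linarith : 0 < m / 2 + 1 / 2)
  have h₄ : 0 < m / 2 + 1 / 2 := by linarith
  rw [div_mul_eq_mul_div, div_mul_eq_mul_div, div_eq_div_iff (by positivity) (by positivity)]
  ring

lemma integral_muMeasure {l : ℝ} (hl : -1 / 2 < l) (F : ℝ → ℝ) :
    ∫ t, F t ∂muMeasure l =
      2 * cConst (2 * l) * ∫ t in Icc (-1 : ℝ) 1, F t * (1 - t ^ 2) ^ (l - 1 / 2) := by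
  have hc := cConst_pos (by linarith : -1 < 2 * l)
  rw [muMeasure, integral_withDensity_eq_integral_toReal_smul (by fun_prop)
    (ae_of_all _ fun _ => ENNReal.ofReal_lt_top), ← integral_const_mul]
  refine setIntegral_congr_fun measurableSet_Icc fun t ht => ?_
  have hw := Real.rpow_nonneg (by nlinarith [ht.1, ht.2] : 0 ≤ 1 - t ^ 2) (l - 1 / 2)
  rw [ENNReal.toReal_ofReal (by positivity), smul_eq_mul]
  ring

lemma integral_muMeasure_add_one_le_of_convexOn {l : ℝ} (hl : -1 / 2 < l) {g : ℝ → ℝ}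
    (hg : ConvexOn ℝ (Icc (-1) 1) g) (hgc : ContinuousOn g (Icc (-1) 1)) :
    ∫ t, g t ∂muMeasure (l + 1) ≤ ∫ t, g t ∂muMeasure l := by
  have hc := cConst_add_two_mul (by linarith : -1 < 2 * l)
  have hc' := cConst_pos (by linarith : -1 < 2 * l + 2)
  have key := mul_setIntegral_mul_one_sub_sq_rpow_add_one_le (p := l - 1 / 2) (by linarith) hg hgc
  rw [integral_muMeasure hl, integral_muMeasure (by linarith),
    show l + 1 - 1 / 2 = l - 1 / 2 + 1 by ring, show 2 * (l + 1) = 2 * l + 2 by ring]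
  set I₀ := ∫ t in Icc (-1 : ℝ) 1, g t * (1 - t ^ 2) ^ (l - 1 / 2)
  set I₁ := ∫ t in Icc (-1 : ℝ) 1, g t * (1 - t ^ 2) ^ (l - 1 / 2 + 1)
  refine le_of_mul_le_mul_left ?_ (by linarith : 0 < 2 * l + 2)
  calc (2 * l + 2) * (2 * cConst (2 * l + 2) * I₁)
        = 2 * cConst (2 * l + 2) * ((2 * (l - 1 / 2) + 3) * I₁) := by ring
    _ ≤ 2 * cConst (2 * l + 2) * ((2 * (l - 1 / 2) + 2) * I₀) := by gcongr
    _ = (2 * l + 2) * (2 * cConst (2 * l) * I₀) := by linear_combination 2 * I₀ * hc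

lemma integral_muMeasure_rpow_le_rpow_add_one {l : ℝ} (hl : -1 / 2 < l) {r : ℝ} (hr : 0 ≤ r)
    (a : ℝ) :
    ∫ t, (1 + 2 * a * t + a ^ 2) ^ r ∂muMeasure l ≤
      ∫ t, (1 + 2 * a * t + a ^ 2) ^ (r + 1) ∂muMeasure l := by
  rw [integral_muMeasure hl, integral_muMeasure hl]
  exact mul_le_mul_of_nonneg_left (setIntegral_rpow_mul_one_sub_sq_rpow_le (by linarith) hr a)
    (by linarith [cConst_pos (by linarith : -1 < 2 * l)])

theorem stmt_17_general (l : ℝ) (hl : -1 / 2 < l) (s : ℝ) (hs : 3 ≤ s) (a : ℝ) :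
    (∫ t, (1 + 2 * a * t + a ^ 2) ^ (s - 2) ∂(muMeasure (l + 1))) ≤
      ∫ t, (1 + 2 * a * t + a ^ 2) ^ (s - 1) ∂(muMeasure l) := by
  have hcont : ContinuousOn (fun t : ℝ => (1 + 2 * a * t + a ^ 2) ^ (s - 2)) (Icc (-1) 1) :=
    ((by fun_prop : Continuous fun t : ℝ => 1 + 2 * a * t + a ^ 2).rpow_const
      fun _ => Or.inr (by linarith)).continuousOn
  calc ∫ t, (1 + 2 * a * t + a ^ 2) ^ (s - 2) ∂muMeasure (l + 1)
      ≤ ∫ t, (1 + 2 * a * t + a ^ 2) ^ (s - 2) ∂muMeasure l :=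
        integral_muMeasure_add_one_le_of_convexOn hl
          (convexOn_rpow_one_add_two_mul_mul_add_sq (by linarith) a) hcont
    _ ≤ ∫ t, (1 + 2 * a * t + a ^ 2) ^ (s - 2 + 1) ∂muMeasure l :=
        integral_muMeasure_rpow_le_rpow_add_one hl (by linarith) a
    _ = ∫ t, (1 + 2 * a * t + a ^ 2) ^ (s - 1) ∂muMeasure l := by ring_nf

theorem stmt_17 (l : ℝ) (hl : -1 / 2 < l) (s : ℝ) (hs : 3 ≤ s) (a : ℝ) (ha : 0 < a) :
    (∫ t, (1 + 2 * a * t + a ^ 2) ^ (s - 2) ∂(muMeasure (l + 1))) ≤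
      ∫ t, (1 + 2 * a * t + a ^ 2) ^ (s - 1) ∂(muMeasure l) :=
  stmt_17_general l hl s hs a
end
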